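/- arXiv:1612.01320 — 2 statements merged into one kernel-verified Lean document; each statement's English description precedes it below -/
import Mathlib

section
/- For a finite simple graph G, the number of acyclic orientations of G equals (-1)^{|V(G)|} · π_G(-1), where π_G is the chromatic polynomial of G. -/
/-- `O` is an orientation of the simple graph `G`: it orients exactly the edges of `G`,
each in exactly one direction. -/
def IsOrientation {V : Type*} (G : SimpleGraph V) (O : V → V → Prop) : Prop :=
  (∀ u v, O u v → G.Adj u v) ∧ (∀ u v, G.Adj u v → (O u v ↔ ¬ O v u))

/-- An orientation is acyclic if it admits no directed cycle. -/
def IsAcyclicRel {V : Type*} (O : V → V → Prop) : Prop :=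
  ∀ v, ¬ Relation.TransGen O v v

/-!
Deletion–contraction. Fix an edge `ab`, let `G - ab` be its deletion and `G / ab` its
contraction. Proper colourings of `G - ab` split according to whether `a` and `b` get the same
colour, so `π_{G - ab} = π_G + π_{G / ab}`. An acyclic orientation of `G` restricts to one of
`G - ab`; conversely an acyclic orientation of `G - ab` extends acyclically by `a → b` unless `b`
reaches `a`, and by `b → a` unless `a` reaches `b`. It never fails both ways, and it succeeds both
ways exactly for the orientations that descend to acyclic orientations of `G / ab`. Hence
`a(G) = a(G - ab) + a(G / ab)`, which is the recursion satisfied by `(-1)^|V| π_G(-1)`; both sides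
equal `1` for edgeless graphs.
-/

open Relation

section

variable {V W : Type*}

def addArc (r : V → V → Prop) (c d : V) : V → V → Prop :=
  fun u v => r u v ∨ (u = c ∧ v = d)

def comapOrientation (H : SimpleGraph V) (f : V → W) (Q : W → W → Prop) : V → V → Prop :=
  fun u v => H.Adj u v ∧ Q (f u) (f v)

def acyclicOrientations (G : SimpleGraph V) : Set (V → V → Prop) :=
  {O | IsOrientation G O ∧ IsAcyclicRel O}

def properColorings (G : SimpleGraph V) (α : Type*) : Set (V → α) :=
  {f | ∀ u v, G.Adj u v → f u ≠ f v}

section AcyclicRel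

variable {r : V → V → Prop}

theorem IsAcyclicRel.of_map {s : W → W → Prop} (f : V → W)
    (hf : ∀ u v, r u v → s (f u) (f v)) (hs : IsAcyclicRel s) : IsAcyclicRel r :=
  fun v hv => hs (f v) (TransGen.lift f hf v v hv)

theorem IsAcyclicRel.asymm (hr : IsAcyclicRel r) {u v : V} (huv : r u v) : ¬ r v u :=
  fun hvu => hr u ((TransGen.single huv).tail hvu)

theorem transGen_addArc {c d x y : V} (h : TransGen (addArc r c d) x y) :
    TransGen r x y ∨ (ReflTransGen r x c ∧ ReflTransGen r d y) := by
  induction h with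
  | single h =>
    rcases h with h | ⟨rfl, rfl⟩
    · exact .inl (.single h)
    · exact .inr ⟨.refl, .refl⟩
  | tail _ step ih =>
    rcases step with h | ⟨rfl, rfl⟩
    · rcases ih with ih | ⟨h₁, h₂⟩
      · exact .inl (ih.tail h)
      · exact .inr ⟨h₁, h₂.tail h⟩
    · rcases ih with ih | ⟨h₁, -⟩
      · exact .inr ⟨ih.to_reflTransGen, .refl⟩
      · exact .inr ⟨h₁, .refl⟩

theorem IsAcyclicRel.addArc_iff (hr : IsAcyclicRel r) {c d : V} :
    IsAcyclicRel (addArc r c d) ↔ ¬ ReflTransGen r d c := by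
  refine ⟨fun h hdc => ?_, fun hdc v hv => ?_⟩
  · exact h c (.head' (.inr ⟨rfl, rfl⟩) (ReflTransGen.mono (fun _ _ => .inl) _ _ hdc))
  · rcases transGen_addArc hv with h | ⟨h₁, h₂⟩
    · exact hr v h
    · exact hdc (h₂.trans h₁)

/-- A walk in the contraction lifts to a path of `r` interrupted by at most one jump inside the
fibre `q ⁻¹' {w}`: a second jump would produce a path between two vertices of that fibre. -/
theorem exists_lift_of_transGen_map {q : V → W} {w : W}
    (hq : ∀ u v, q u = q v → u = v ∨ q u = w) (hr : ∀ u v, q u = q v → ¬ TransGen r u v)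
    {x y : W} (h : TransGen (Relation.Map r q q) x y) :
    ∃ u v, q u = x ∧ q v = y ∧
      ∃ c d, q c = q d ∧ ReflTransGen r u c ∧ TransGen r d v := by
  induction h with
  | single h =>
    obtain ⟨s, t, hst, rfl, rfl⟩ := h
    exact ⟨s, t, rfl, rfl, s, s, rfl, .refl, .single hst⟩
  | tail _ step ih =>
    obtain ⟨u, v, rfl, rfl, c, d, hcd, huc, hdv⟩ := ih
    obtain ⟨s, t, hst, hsv, rfl⟩ := step
    rcases hq v s hsv.symm with rfl | hvw
    · exact ⟨u, t, rfl, rfl, c, d, hcd, huc, hdv.tail hst⟩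
    rcases hq c d hcd with rfl | hcw
    · exact ⟨u, t, rfl, rfl, v, s, hsv.symm, (huc.trans hdv.to_reflTransGen), .single hst⟩
    · exact absurd hdv (hr d v (hcd.symm.trans (hcw.trans hvw.symm)))

theorem isAcyclicRel_map {q : V → W} {w : W} (hq : ∀ u v, q u = q v → u = v ∨ q u = w)
    (hr : ∀ u v, q u = q v → ¬ TransGen r u v) : IsAcyclicRel (Relation.Map r q q) := by
  intro x hx
  obtain ⟨u, v, rfl, huv, c, d, hcd, huc, hdv⟩ := exists_lift_of_transGen_map hq hr hx
  rcases hq u v huv.symm with rfl | huw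
  · exact hr d c hcd.symm (hdv.trans_left huc)
  rcases hq c d hcd with rfl | hcw
  · exact hr u v huv.symm (TransGen.trans_right huc hdv)
  · exact hr d v (hcd.symm.trans (hcw.trans (huw.symm.trans huv.symm))) hdv

end AcyclicRel

section Orientation

variable {G H : SimpleGraph V} {O : V → V → Prop}

theorem IsOrientation.adj (hO : IsOrientation G O) {u v : V} (h : O u v) : G.Adj u v :=
  hO.1 u v h

theorem IsOrientation.rel_or_rel (hO : IsOrientation G O) {u v : V} (h : G.Adj u v) :
    O u v ∨ O v u :=
  or_iff_not_imp_right.2 fun hvu => by_contra fun huv => hvu ((hO.2 v u h.symm).2 huv)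

theorem IsOrientation.of_isAcyclicRel (hO : IsAcyclicRel O) (hadj : ∀ u v, O u v → G.Adj u v)
    (htot : ∀ u v, G.Adj u v → O u v ∨ O v u) : IsOrientation G O :=
  ⟨hadj, fun u v h => ⟨hO.asymm, (htot u v h).resolve_right⟩⟩

theorem IsOrientation.comap {K : SimpleGraph W} {Q : W → W → Prop} (hQ : IsOrientation K Q)
    {f : V → W} (hf : ∀ u v, H.Adj u v → K.Adj (f u) (f v)) :
    IsOrientation H (comapOrientation H f Q) :=
  ⟨fun _ _ h => h.1, fun u v h => by
    simpa only [comapOrientation, h, h.symm, true_and] using hQ.2 _ _ (hf u v h)⟩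

end Orientation

section DeleteEdge

variable {G : SimpleGraph V} {a b : V}

theorem deleteEdges_singleton_adj {u v : V} :
    (G.deleteEdges {s(a, b)}).Adj u v ↔ G.Adj u v ∧ s(u, v) ≠ s(a, b) := by
  simp

theorem IsOrientation.addArc {O : V → V → Prop} (hab : G.Adj a b)
    (hO : IsOrientation (G.deleteEdges {s(a, b)}) O) (hac : IsAcyclicRel (addArc O a b)) :
    IsOrientation G (addArc O a b) := by
  refine .of_isAcyclicRel hac ?_ fun u v h => ?_
  · rintro u v (h | ⟨rfl, rfl⟩)
    exacts [G.deleteEdges_le _ (hO.adj h), hab]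
  by_cases he : s(u, v) = s(a, b)
  · rcases Sym2.eq_iff.1 he with ⟨rfl, rfl⟩ | ⟨rfl, rfl⟩
    exacts [.inl (.inr ⟨rfl, rfl⟩), .inr (.inr ⟨rfl, rfl⟩)]
  · exact (hO.rel_or_rel (deleteEdges_singleton_adj.2 ⟨h, he⟩)).imp .inl .inl

theorem comapOrientation_addArc {O : V → V → Prop}
    (hO : IsOrientation (G.deleteEdges {s(a, b)}) O) :
    comapOrientation (G.deleteEdges {s(a, b)}) id (addArc O a b) = O := by
  funext u v
  refine propext ⟨fun ⟨hadj, h⟩ => h.resolve_right ?_, fun h => ⟨hO.adj h, .inl h⟩⟩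
  rintro ⟨rfl, rfl⟩
  exact (deleteEdges_singleton_adj.1 hadj).2 rfl

theorem addArc_comapOrientation {O : V → V → Prop} (hO : O ∈ acyclicOrientations G)
    (hab : O a b) : addArc (comapOrientation (G.deleteEdges {s(a, b)}) id O) a b = O := by
  funext u v
  refine propext ⟨by rintro (⟨-, h⟩ | ⟨rfl, rfl⟩); exacts [h, hab], fun h => ?_⟩
  by_cases he : s(u, v) = s(a, b)
  · rcases Sym2.eq_iff.1 he with ⟨rfl, rfl⟩ | ⟨rfl, rfl⟩
    · exact .inr ⟨rfl, rfl⟩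
    · exact absurd h (hO.2.asymm hab)
  · exact .inl ⟨deleteEdges_singleton_adj.2 ⟨hO.1.adj h, he⟩, h⟩

theorem ncard_acyclicOrientations_inter_setOf_rel (hab : G.Adj a b) :
    (acyclicOrientations G ∩ {O | O a b}).ncard =
      (acyclicOrientations (G.deleteEdges {s(a, b)}) ∩ {O | ¬ ReflTransGen O b a}).ncard := by
  symm
  refine Set.BijOn.ncard_eq (f := fun O => addArc O a b)
    (Set.InvOn.bijOn (f' := comapOrientation (G.deleteEdges {s(a, b)}) id) ⟨?_, ?_⟩ ?_ ?_)
  · rintro O ⟨⟨hO, -⟩, -⟩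
    exact comapOrientation_addArc hO
  · rintro O ⟨hO, hab'⟩
    exact addArc_comapOrientation hO hab'
  · rintro O ⟨⟨hO, hac⟩, hba⟩
    have hac' := (hac.addArc_iff).2 hba
    exact ⟨⟨hO.addArc hab hac', hac'⟩, .inr ⟨rfl, rfl⟩⟩
  · rintro O ⟨⟨hO, hac⟩, hab'⟩
    refine ⟨⟨hO.comap fun u v h => G.deleteEdges_le _ h, hac.of_map id fun _ _ h => h.2⟩,
      ?_⟩
    exact fun hba => hac a (.head' hab' (ReflTransGen.mono (fun _ _ h => h.2) _ _ hba))

end DeleteEdge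

section Contract

variable {H : SimpleGraph V} {q : V → W} {w : W}

theorem IsOrientation.map {O : V → V → Prop} (hH : ∀ u v, H.Adj u v → q u ≠ q v)
    (hq : ∀ u v, q u = q v → u = v ∨ q u = w) (hO : IsOrientation H O)
    (hr : ∀ u v, q u = q v → ¬ TransGen O u v) :
    IsOrientation (H.map q) (Relation.Map O q q) := by
  refine .of_isAcyclicRel (isAcyclicRel_map hq hr) ?_ ?_
  · rintro _ _ ⟨u, v, h, rfl, rfl⟩
    exact SimpleGraph.map_adj_apply' (hO.adj h) (hH u v (hO.adj h))
  · rintro _ _ ⟨-, u, v, h, rfl, rfl⟩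
    exact (hO.rel_or_rel h).imp (⟨u, v, ·, rfl, rfl⟩) (⟨v, u, ·, rfl, rfl⟩)

theorem comapOrientation_map {O : V → V → Prop} (hq : ∀ u v, q u = q v → u = v ∨ q u = w)
    (hO : IsOrientation H O) (hr : ∀ u v, q u = q v → ¬ TransGen O u v) :
    comapOrientation H q (Relation.Map O q q) = O := by
  funext u v
  refine propext ⟨fun ⟨hadj, huv⟩ => (hO.rel_or_rel hadj).resolve_right fun hvu => ?_,
    fun h => ⟨hO.adj h, u, v, h, rfl, rfl⟩⟩
  exact (isAcyclicRel_map hq hr).asymm huv ⟨v, u, hvu, rfl, rfl⟩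

theorem map_comapOrientation {Q : W → W → Prop} (hQ : IsOrientation (H.map q) Q) :
    Relation.Map (comapOrientation H q Q) q q = Q := by
  funext x y
  refine propext ⟨by rintro ⟨u, v, ⟨-, h⟩, rfl, rfl⟩; exact h, fun h => ?_⟩
  obtain ⟨-, u, v, hadj, rfl, rfl⟩ := hQ.adj h
  exact ⟨u, v, ⟨hadj, h⟩, rfl, rfl⟩

theorem ncard_setOf_isOrientation_forall_not_transGen (hH : ∀ u v, H.Adj u v → q u ≠ q v)
    (hq : ∀ u v, q u = q v → u = v ∨ q u = w) :
    {O | IsOrientation H O ∧ ∀ u v, q u = q v → ¬ TransGen O u v}.ncard =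
      (acyclicOrientations (H.map q)).ncard := by
  refine Set.BijOn.ncard_eq (f := fun O => Relation.Map O q q)
    (Set.InvOn.bijOn (f' := comapOrientation H q) ⟨?_, ?_⟩ ?_ ?_)
  · rintro O ⟨hO, hr⟩
    exact comapOrientation_map hq hO hr
  · rintro Q ⟨hQ, -⟩
    exact map_comapOrientation hQ
  · rintro O ⟨hO, hr⟩
    exact ⟨hO.map hH hq hr, isAcyclicRel_map hq hr⟩
  · rintro Q ⟨hQ, hac⟩
    refine ⟨hQ.comap fun u v h => SimpleGraph.map_adj_apply' h (hH u v h), fun u v huv h => ?_⟩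
    have hQuv : TransGen Q (q u) (q v) := TransGen.lift q (fun _ _ h => h.2) u v h
    rw [huv] at hQuv
    exact hac _ hQuv

theorem image_comp_properColorings_map {α : Type*} (hH : ∀ u v, H.Adj u v → q u ≠ q v)
    (hq : Function.Surjective q) :
    (· ∘ q) '' properColorings (H.map q) α =
      {f ∈ properColorings H α | ∀ u v, q u = q v → f u = f v} := by
  ext f
  constructor
  · rintro ⟨g, hg, rfl⟩
    exact ⟨fun u v h => hg _ _ (SimpleGraph.map_adj_apply' h (hH u v h)),
      fun u v huv => congrArg g huv⟩
  · rintro ⟨hf, hconst⟩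
    have hsec (v : V) : f (Function.surjInv hq (q v)) = f v :=
      hconst _ _ (Function.surjInv_eq hq (q v))
    refine ⟨f ∘ Function.surjInv hq, ?_, funext hsec⟩
    rintro _ _ ⟨-, u, v, h, rfl, rfl⟩
    simpa only [Function.comp_apply, hsec] using hf u v h

end Contract

section DeletionContraction

variable {G : SimpleGraph V} {a b : V} {q : V → W}

theorem properColorings_deleteEdges_diff {α : Type*} (hab : G.Adj a b) :
    properColorings (G.deleteEdges {s(a, b)}) α \ {f | f a = f b} = properColorings G α := by
  ext f
  refine ⟨fun ⟨hf, hfab⟩ u v h => ?_, fun hf => ⟨fun u v h => hf u v (G.deleteEdges_le _ h),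
    hf a b hab⟩⟩
  by_cases he : s(u, v) = s(a, b)
  · rcases Sym2.eq_iff.1 he with ⟨rfl, rfl⟩ | ⟨rfl, rfl⟩
    exacts [hfab, Ne.symm hfab]
  · exact hf u v (deleteEdges_singleton_adj.2 ⟨h, he⟩)

theorem union_acyclicOrientations_not_reflTransGen (hne : a ≠ b) (H : SimpleGraph V) :
    (acyclicOrientations H ∩ {O | ¬ ReflTransGen O b a}) ∪
        (acyclicOrientations H ∩ {O | ¬ ReflTransGen O a b}) = acyclicOrientations H := by
  ext O
  refine ⟨fun h => h.elim (·.1) (·.1), fun hO => ?_⟩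
  by_cases hba : ReflTransGen O b a
  · refine .inr ⟨hO, fun hab' => hO.2 a ?_⟩
    exact ((reflTransGen_iff_eq_or_transGen.1 hab').resolve_left hne.symm).trans_left hba
  · exact .inl ⟨hO, hba⟩

-- `q` identifies exactly `a` with `b`, so `(G.deleteEdges {s(a, b)}).map q` is the contraction
-- `G / ab`.
variable (hq : ∀ u v, q u = q v ↔ u = v ∨ s(u, v) = s(a, b))
include hq

theorem ne_of_adj_deleteEdges {u v : V} (h : (G.deleteEdges {s(a, b)}).Adj u v) : q u ≠ q v :=
  fun huv => ((hq u v).1 huv).elim h.ne (deleteEdges_singleton_adj.1 h).2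

theorem eq_or_apply_eq_left_of_apply_eq (u v : V) (huv : q u = q v) : u = v ∨ q u = q a := by
  refine ((hq u v).1 huv).imp_right fun he => ?_
  rcases Sym2.eq_iff.1 he with ⟨rfl, -⟩ | ⟨rfl, -⟩
  exacts [rfl, (hq u a).2 (.inr Sym2.eq_swap)]

theorem ncard_properColorings_deleteEdges {α : Type*} [Finite V] [Finite α] (hab : G.Adj a b)
    (hsurj : Function.Surjective q) :
    (properColorings (G.deleteEdges {s(a, b)}) α).ncard =
      (properColorings G α).ncard +
        (properColorings ((G.deleteEdges {s(a, b)}).map q) α).ncard := by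
  have hcontract : properColorings (G.deleteEdges {s(a, b)}) α ∩ {f | f a = f b} =
      (· ∘ q) '' properColorings ((G.deleteEdges {s(a, b)}).map q) α := by
    rw [image_comp_properColorings_map (fun u v => ne_of_adj_deleteEdges hq) hsurj]
    refine Set.ext fun f => and_congr_right fun _ => ⟨fun hfab u v huv => ?_, fun h => h a b ?_⟩
    · rcases (hq u v).1 huv with rfl | he
      · rfl
      · rcases Sym2.eq_iff.1 he with ⟨rfl, rfl⟩ | ⟨rfl, rfl⟩
        exacts [hfab, hfab.symm]
    · exact (hq a b).2 (.inr rfl)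
  rw [← Set.ncard_inter_add_ncard_sdiff_eq_ncard _ {f | f a = f b},
    properColorings_deleteEdges_diff hab, hcontract,
    Set.ncard_image_of_injective _ hsurj.injective_comp_right, add_comm]

theorem inter_acyclicOrientations_not_reflTransGen (hab : G.Adj a b) :
    (acyclicOrientations (G.deleteEdges {s(a, b)}) ∩ {O | ¬ ReflTransGen O b a}) ∩
        (acyclicOrientations (G.deleteEdges {s(a, b)}) ∩ {O | ¬ ReflTransGen O a b}) =
      {O | IsOrientation (G.deleteEdges {s(a, b)}) O ∧
        ∀ u v, q u = q v → ¬ TransGen O u v} := by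
  ext O
  constructor
  · rintro ⟨⟨⟨hO, hac⟩, hba⟩, -, hab'⟩
    refine ⟨hO, fun u v huv h => ?_⟩
    rcases (hq u v).1 huv with rfl | he
    · exact hac u h
    · rcases Sym2.eq_iff.1 he with ⟨rfl, rfl⟩ | ⟨rfl, rfl⟩
      exacts [hab' h.to_reflTransGen, hba h.to_reflTransGen]
  · rintro ⟨hO, hr⟩
    have hac : IsAcyclicRel O := fun v => hr v v rfl
    have hqab : q a = q b := (hq a b).2 (.inr rfl)
    exact ⟨⟨⟨hO, hac⟩, fun h => (reflTransGen_iff_eq_or_transGen.1 h).elim hab.ne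
      (hr b a hqab.symm)⟩, ⟨hO, hac⟩, fun h => (reflTransGen_iff_eq_or_transGen.1 h).elim
        hab.ne.symm (hr a b hqab)⟩

theorem ncard_acyclicOrientations_eq_add [Finite V] (hab : G.Adj a b) :
    (acyclicOrientations G).ncard = (acyclicOrientations (G.deleteEdges {s(a, b)})).ncard +
      (acyclicOrientations ((G.deleteEdges {s(a, b)}).map q)).ncard := by
  set H := G.deleteEdges {s(a, b)}
  have hswap : G.deleteEdges {s(b, a)} = H := by rw [Sym2.eq_swap]
  have hsplit : acyclicOrientations G \ {O | O a b} = acyclicOrientations G ∩ {O | O b a} :=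
    Set.ext fun O => and_congr_right fun hO => (not_congr (hO.1.2 a b hab)).trans not_not
  calc (acyclicOrientations G).ncard
      = (acyclicOrientations G ∩ {O | O a b}).ncard +
          (acyclicOrientations G ∩ {O | O b a}).ncard := by
        rw [← Set.ncard_inter_add_ncard_sdiff_eq_ncard _ {O | O a b}, hsplit]
    _ = (acyclicOrientations H ∩ {O | ¬ ReflTransGen O b a}).ncard +
          (acyclicOrientations H ∩ {O | ¬ ReflTransGen O a b}).ncard := by
        rw [ncard_acyclicOrientations_inter_setOf_rel hab,
          ncard_acyclicOrientations_inter_setOf_rel hab.symm, hswap]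
    _ = (acyclicOrientations H).ncard + (acyclicOrientations (H.map q)).ncard := by
        rw [← Set.ncard_union_add_ncard_inter, union_acyclicOrientations_not_reflTransGen hab.ne,
          inter_acyclicOrientations_not_reflTransGen hq hab,
          ncard_setOf_isOrientation_forall_not_transGen (fun u v => ne_of_adj_deleteEdges hq)
            (eq_or_apply_eq_left_of_apply_eq hq)]

end DeletionContraction

section MergeVertex

variable {a b : V}

open Classical in
noncomputable def mergeVertex (hab : a ≠ b) (v : V) : {v : V // v ≠ b} :=
  if h : v = b then ⟨a, hab⟩ else ⟨v, h⟩

theorem mergeVertex_surjective (hab : a ≠ b) : Function.Surjective (mergeVertex hab) :=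
  fun w => ⟨w, by simp [mergeVertex, w.2]⟩

theorem mergeVertex_eq_iff (hab : a ≠ b) (u v : V) :
    mergeVertex hab u = mergeVertex hab v ↔ u = v ∨ s(u, v) = s(a, b) := by
  unfold mergeVertex
  split_ifs <;> simp only [Subtype.mk.injEq, Sym2.eq_iff] <;> grind

end MergeVertex

theorem Nat.card_subtype_ne_add_one [Finite V] (b : V) :
    Nat.card {v : V // v ≠ b} + 1 = Nat.card V := by
  classical
  rw [← Finite.card_option, Nat.card_congr (Equiv.optionSubtypeNe b)]

open Polynomial

def IsChromaticPolynomial (G : SimpleGraph V) (P : ℚ[X]) : Prop :=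
  ∀ c : ℕ, P.eval (c : ℚ) = (properColorings G (Fin c)).ncard

theorem IsChromaticPolynomial.unique {G : SimpleGraph V} {P Q : ℚ[X]}
    (hP : IsChromaticPolynomial G P) (hQ : IsChromaticPolynomial G Q) : P = Q :=
  eq_of_infinite_eval_eq P Q <|
    Set.infinite_of_injective_forall_mem Nat.cast_injective fun c => (hP c).trans (hQ c).symm

/-- Stanley's identity, bundled with the existence of the chromatic polynomial so that both
follow from one deletion–contraction induction. -/
def StanleyFormula (G : SimpleGraph V) : Prop :=
  ∃ P : ℚ[X], IsChromaticPolynomial G P ∧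
    ((acyclicOrientations G).ncard : ℚ) = (-1) ^ Nat.card V * P.eval (-1)

theorem stanleyFormula_bot [Finite V] : StanleyFormula (⊥ : SimpleGraph V) := by
  have hO : acyclicOrientations (⊥ : SimpleGraph V) = {fun _ _ => False} := by
    refine Set.eq_singleton_iff_unique_mem.2 ⟨⟨⟨fun _ _ => False.elim, fun _ _ h => h.elim⟩,
      fun v hv => ?_⟩,
      fun O ⟨hO, _⟩ => funext₂ fun _ _ => propext ⟨hO.adj, False.elim⟩⟩
    cases hv <;> assumption
  refine ⟨X ^ Nat.card V, fun c => ?_, ?_⟩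
  · have hcol : properColorings (⊥ : SimpleGraph V) (Fin c) = Set.univ :=
      Set.eq_univ_of_forall fun _ _ _ h => h.elim
    simp [hcol, Set.ncard_univ, Nat.card_fun]
  · rw [hO, Set.ncard_singleton, eval_pow, eval_X, ← mul_pow]
    norm_num

theorem StanleyFormula.of_deleteEdges [Finite V] {G : SimpleGraph V} {a b : V} {q : V → W}
    (hab : G.Adj a b) (hsurj : Function.Surjective q)
    (hq : ∀ u v, q u = q v ↔ u = v ∨ s(u, v) = s(a, b)) (hcard : Nat.card W + 1 = Nat.card V)
    (hdel : StanleyFormula (G.deleteEdges {s(a, b)}))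
    (hcon : StanleyFormula ((G.deleteEdges {s(a, b)}).map q)) : StanleyFormula G := by
  obtain ⟨PD, hPD, hD⟩ := hdel
  obtain ⟨PC, hPC, hC⟩ := hcon
  refine ⟨PD - PC, fun c => ?_, ?_⟩
  · rw [eval_sub, hPD, hPC, ncard_properColorings_deleteEdges hq hab hsurj]
    push_cast
    ring
  · rw [ncard_acyclicOrientations_eq_add hq hab, Nat.cast_add, hD, hC, eval_sub, ← hcard]
    ring

theorem stanleyFormula [Finite V] (G : SimpleGraph V) : StanleyFormula G := by
  induction hn : Nat.card V using Nat.strong_induction_on generalizing V with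
  | _ n ih =>
  induction G using WellFoundedLT.induction with
  | _ G ihG =>
  by_cases hG : G = ⊥
  · exact hG ▸ stanleyFormula_bot
  obtain ⟨a, b, hab⟩ := SimpleGraph.ne_bot_iff_exists_adj.1 hG
  have hcard := Nat.card_subtype_ne_add_one b
  refine .of_deleteEdges hab (mergeVertex_surjective hab.ne) (mergeVertex_eq_iff hab.ne) hcard
    (ihG _ ?_) (ih _ (by omega) _ rfl)
  exact lt_of_le_of_ne (G.deleteEdges_le _) fun h => (deleteEdges_singleton_adj.1 (h ▸ hab)).2 rfl

end

/-- The number of acyclic orientations of a finite simple graph `G` equals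
`(-1)^{|V|} · π_G(-1)`, where `π_G` is the chromatic polynomial of `G` (characterized by
its values at natural numbers). -/
theorem stmt5 {V : Type*} [Fintype V] (G : SimpleGraph V)
    (P : Polynomial ℚ)
    (hP : ∀ c : ℕ, P.eval (c : ℚ) =
      Nat.card {f : V → Fin c // ∀ u v, G.Adj u v → f u ≠ f v}) :
    (Nat.card {O : V → V → Prop // IsOrientation G O ∧ IsAcyclicRel O} : ℚ) =
      (-1) ^ (Fintype.card V) * P.eval (-1) := by
  obtain ⟨Q, hQ, hcount⟩ := stanleyFormula G
  rw [IsChromaticPolynomial.unique hP hQ, ← Nat.card_eq_fintype_card]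
  exact hcount
end

section
/- Let G be a simple graph on vertex set I, and let w ∈ M(I, G) be an element of the free partially commutative monoid whose initial alphabet (as a set) is {i}. Let m be the number of occurrences of i in w. Then there exist unique w_1, ..., w_m ∈ M(I, G) such that w = w_1 ⋯ w_m, and for each j, the initial alphabet multiset of w_j equals {i} and i occurs exactly once in w_j. -/
/-- The commutation relation on the free monoid: two letters may be exchanged
whenever they are not adjacent in `G`. -/
def traceRel {V : Type*} (G : SimpleGraph V) : FreeMonoid V → FreeMonoid V → Prop :=
  fun x y => ∃ a b : V, ¬ G.Adj a b ∧
    x = FreeMonoid.of a * FreeMonoid.of b ∧ y = FreeMonoid.of b * FreeMonoid.of a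

/-- The congruence on the free monoid generated by the commutation relations. -/
def traceCon {V : Type*} (G : SimpleGraph V) : Con (FreeMonoid V) := conGen (traceRel G)

/-- The free partially commutative monoid (trace monoid) `M(I, G)` associated to `G`. -/
abbrev TraceMonoid {V : Type*} (G : SimpleGraph V) := (traceCon G).Quotient

/-- The element of the trace monoid represented by a list of letters. -/
def traceMk {V : Type*} (G : SimpleGraph V) (L : List V) : TraceMonoid G :=
  (traceCon G).mk' (FreeMonoid.ofList L)

/-- The multiplicity of the letter `i` in the initial alphabet multiset `IA_m(w)`:
the largest `m` such that `w = u · iᵐ`. -/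
noncomputable def IAcount {V : Type*} (G : SimpleGraph V) (w : TraceMonoid G) (i : V) : ℕ :=
  sSup {m : ℕ | ∃ u : TraceMonoid G, w = u * (traceMk G [i]) ^ m}

/-- The initial alphabet `IA(w)` of a trace: the set of letters `i` with `w = u · i`. -/
def IAset {V : Type*} (G : SimpleGraph V) (w : TraceMonoid G) : Set V :=
  {i | ∃ u : TraceMonoid G, w = u * traceMk G [i]}


/-!
Two words represent the same trace iff their restrictions to every clique of `G` coincide. This
makes the trace monoid cancellative and shows that `v ∈ IA(w)` iff, in some word for `w`, an
occurrence of `v` is followed only by letters different from and independent of `v`.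

Existence: write a word for `w` as `B i T` with `i ∉ B`. The letters of `B` joined to this `i`
by a chain of adjacencies form a word `K` with `IA(K i) = {i}`; the other letters commute past
`K i`, so `w = (K i) w'` with `IA(w') ⊆ {i}`, and we induct on the number of `i`s.

Uniqueness: if `X r = X' r'` for two such first factors, Levi's lemma gives `X = P Q`, `X' = P Q'`
with `Q`, `Q'` independent, in particular with disjoint alphabets. Both contain `i` equally often,
hence not at all; but a nonempty `Q` would end in `i` since `IA(X) = {i}`. So `X = P = X'`;
cancel and repeat.
-/

section Basic

variable {V : Type*} {G : SimpleGraph V}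

theorem traceMk_append (A B : List V) : traceMk G (A ++ B) = traceMk G A * traceMk G B :=
  map_mul (traceCon G).mk' _ _

theorem traceMk_cons (a : V) (A : List V) : traceMk G (a :: A) = traceMk G [a] * traceMk G A :=
  traceMk_append [a] A

theorem traceMk_nil : traceMk G ([] : List V) = 1 :=
  map_one (traceCon G).mk'

theorem traceMk_surjective : Function.Surjective (traceMk G) :=
  Con.mk'_surjective.comp FreeMonoid.ofList.surjective

theorem traceMk_replicate (m : ℕ) (i : V) :
    traceMk G (List.replicate m i) = traceMk G [i] ^ m := by
  induction m with
  | zero => exact traceMk_nil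
  | succ m ih => rw [List.replicate_succ', traceMk_append, ih, pow_succ]

theorem commute_traceMk_singleton {a b : V} (h : ¬ G.Adj a b) :
    Commute (traceMk G [a]) (traceMk G [b]) :=
  (Con.eq _).2 (ConGen.Rel.of _ _ ⟨a, b, h, rfl, rfl⟩)

theorem commute_traceMk_of_forall_not_adj {c : V} :
    ∀ {A : List V}, (∀ x ∈ A, ¬ G.Adj c x) → Commute (traceMk G [c]) (traceMk G A)
  | [], _ => by rw [traceMk_nil]; exact Commute.one_right _
  | a :: A, h =>
    (commute_traceMk_singleton (h a List.mem_cons_self)).mul_right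
      (commute_traceMk_of_forall_not_adj fun x hx => h x (List.mem_cons_of_mem a hx))

theorem traceMk_append_cons_comm {c : V} {B : List V} (hB : ∀ b ∈ B, ¬ G.Adj c b)
    (A : List V) : traceMk G (A ++ c :: B) = traceMk G (A ++ B ++ [c]) := by
  rw [traceMk_append A, List.append_assoc, traceMk_append A, traceMk_append B,
    ← (commute_traceMk_of_forall_not_adj hB).eq]
  rfl

end Basic

section Invariants

variable {V : Type*} {G : SimpleGraph V} {L L' : List V}

theorem map_ofList_eq_of_traceMk_eq {M : Type*} [Monoid M] (f : FreeMonoid V →* M)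
    (hf : ∀ a b, ¬ G.Adj a b → Commute (f (.of a)) (f (.of b)))
    (h : traceMk G L = traceMk G L') : f (.ofList L) = f (.ofList L') := by
  have hker : traceCon G ≤ Con.ker f := Con.conGen_le.2 <| by
    rintro _ _ ⟨a, b, hab, rfl, rfl⟩
    rw [Con.ker_rel, map_mul, map_mul]
    exact hf a b hab
  exact hker ((Con.eq _).1 h)

theorem filter_eq_of_traceMk_eq {p : V → Bool} (hp : G.IsClique {v | p v})
    (h : traceMk G L = traceMk G L') : L.filter p = L'.filter p := by
  let f : FreeMonoid V →* FreeMonoid V := FreeMonoid.lift fun v => if p v then .of v else 1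
  have hf : ∀ l : List V, f (.ofList l) = .ofList (l.filter p) := by
    intro l
    induction l with
    | nil => rfl
    | cons a l ih =>
      rw [FreeMonoid.ofList_cons, map_mul, ih, FreeMonoid.lift_eval_of, List.filter_cons]
      split_ifs <;> simp
  refine FreeMonoid.ofList.injective ?_
  rw [← hf, ← hf]
  refine map_ofList_eq_of_traceMk_eq f (fun a b hab => ?_) h
  simp only [f, FreeMonoid.lift_eval_of]
  by_cases hpab : p a ∧ p b
  · obtain rfl : a = b := by_contra fun hne => hab (hp hpab.1 hpab.2 hne)
    exact Commute.refl _
  · rcases not_and_or.1 hpab with h | h <;> simp [h]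

end Invariants

section Projection

variable {V : Type*} [DecidableEq V] {G : SimpleGraph V} {L L' : List V}

theorem perm_of_forall_filter_eq
    (h : ∀ p : V → Bool, G.IsClique {v | p v} → L.filter p = L'.filter p) : L.Perm L' := by
  refine List.perm_iff_count.2 fun c => ?_
  rw [List.count_eq_length_filter, List.count_eq_length_filter, h]
  intro a ha b hb hab
  simp_all

theorem perm_of_traceMk_eq (h : traceMk G L = traceMk G L') : L.Perm L' :=
  perm_of_forall_filter_eq fun _ hp => filter_eq_of_traceMk_eq hp h

theorem forall_not_adj_of_filter_eq {c : V} {T A B : List V}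
    (h : ∀ p : V → Bool, G.IsClique {v | p v} → (c :: T).filter p = (A ++ c :: B).filter p)
    (hcA : c ∉ A) : ∀ d ∈ A, ¬ G.Adj c d := by
  intro d hd hcd
  let p : V → Bool := fun v => v = c ∨ v = d
  have hp : G.IsClique {v | p v} := by
    intro x hx y hy hxy
    simp only [p, Set.mem_ofPred_eq, decide_eq_true_eq] at hx hy
    rcases hx with rfl | rfl <;> rcases hy with rfl | rfl
    exacts [absurd rfl hxy, hcd, hcd.symm, absurd rfl hxy]
  have hfind := congrArg List.head? (h p hp)
  obtain ⟨x, hx⟩ : ∃ x, A.find? p = some x :=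
    Option.isSome_iff_exists.1 (List.find?_isSome.2 ⟨d, hd, by simp [p]⟩)
  simp only [List.head?_filter, List.find?_append, hx, Option.some_or, List.find?_cons,
    show p c = true by simp [p], Option.some.injEq] at hfind
  exact hcA (hfind ▸ List.mem_of_find?_eq_some hx)

theorem traceMk_eq_iff_forall_filter_eq :
    traceMk G L = traceMk G L' ↔
      ∀ p : V → Bool, G.IsClique {v | p v} → L.filter p = L'.filter p := by
  refine ⟨fun h p hp => filter_eq_of_traceMk_eq hp h, fun h => ?_⟩
  induction L generalizing L' with
  | nil => rw [(perm_of_forall_filter_eq h).nil_eq]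
  | cons c T ih =>
    obtain ⟨A, B, rfl, hcA⟩ :=
      List.eq_append_cons_of_mem ((perm_of_forall_filter_eq h).mem_iff.1 List.mem_cons_self)
    have hmove : traceMk G (A ++ c :: B) = traceMk G (c :: (A ++ B)) := by
      rw [traceMk_append, traceMk_cons, ← mul_assoc,
        ← (commute_traceMk_of_forall_not_adj (forall_not_adj_of_filter_eq h hcA)).eq,
        mul_assoc, ← traceMk_append, ← traceMk_cons]
    have htail : traceMk G T = traceMk G (A ++ B) := ih fun p hp => by
      have hc := (h p hp).trans (filter_eq_of_traceMk_eq hp hmove)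
      rw [← List.singleton_append, List.filter_append, ← List.singleton_append (l := A ++ B),
        List.filter_append] at hc
      exact List.append_cancel_left hc
    rw [hmove, traceMk_cons, htail, ← traceMk_cons]

instance : IsCancelMul (TraceMonoid G) where
  mul_left_cancel x y z h := by
    obtain ⟨X, rfl⟩ := traceMk_surjective x
    obtain ⟨Y, rfl⟩ := traceMk_surjective y
    obtain ⟨Z, rfl⟩ := traceMk_surjective z
    refine traceMk_eq_iff_forall_filter_eq.2 fun p hp =>
      List.append_cancel_left (as := X.filter p) ?_
    rw [← List.filter_append, ← List.filter_append]
    exact filter_eq_of_traceMk_eq hp h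
  mul_right_cancel x y z h := by
    obtain ⟨X, rfl⟩ := traceMk_surjective x
    obtain ⟨Y, rfl⟩ := traceMk_surjective y
    obtain ⟨Z, rfl⟩ := traceMk_surjective z
    refine traceMk_eq_iff_forall_filter_eq.2 fun p hp =>
      List.append_cancel_right (bs := X.filter p) ?_
    rw [← List.filter_append, ← List.filter_append]
    exact filter_eq_of_traceMk_eq hp h

theorem traceMk_reverse_eq (h : traceMk G L = traceMk G L') :
    traceMk G L.reverse = traceMk G L'.reverse :=
  traceMk_eq_iff_forall_filter_eq.2 fun p hp => by
    rw [List.filter_reverse, List.filter_reverse, filter_eq_of_traceMk_eq hp h]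

end Projection

section InitialAlphabet

variable {V : Type*} {G : SimpleGraph V}

theorem IAset_subset_mul (x y : TraceMonoid G) : IAset G y ⊆ IAset G (x * y) :=
  fun _ ⟨u, hu⟩ => ⟨x * u, by rw [hu, mul_assoc]⟩

theorem mem_of_IAset_subset {P Q : List V} {i : V}
    (h : IAset G (traceMk G (P ++ Q)) ⊆ {i}) (hQ : Q ≠ []) : i ∈ Q := by
  obtain ⟨Q, b, rfl⟩ := (List.eq_nil_or_concat' Q).resolve_left hQ
  obtain rfl : b = i := h ⟨traceMk G (P ++ Q), by rw [← List.append_assoc, traceMk_append]⟩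
  exact List.mem_append_right Q (List.mem_singleton_self b)

variable [DecidableEq V]

theorem mem_IAset_traceMk_iff {L : List V} {v : V} :
    v ∈ IAset G (traceMk G L) ↔
      ∃ A B, L = A ++ v :: B ∧ ∀ b ∈ B, ¬ G.Adj v b ∧ b ≠ v := by
  constructor
  · rintro ⟨u, hu⟩
    obtain ⟨M, rfl⟩ := traceMk_surjective u
    rw [← traceMk_append] at hu
    -- Reversal turns the last occurrence of `v` in `L` into the first one.
    have hv : v ∈ L.reverse := List.mem_reverse.2 ((perm_of_traceMk_eq hu).mem_iff.2 (by simp))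
    obtain ⟨S, T, hL, hvS⟩ := List.eq_append_cons_of_mem hv
    have hrev := traceMk_reverse_eq hu
    rw [hL, List.reverse_append, List.reverse_singleton, List.singleton_append] at hrev
    have hS := forall_not_adj_of_filter_eq (fun p hp => filter_eq_of_traceMk_eq hp hrev.symm) hvS
    refine ⟨T.reverse, S.reverse, by simpa using congrArg List.reverse hL, fun b hb => ?_⟩
    rw [List.mem_reverse] at hb
    exact ⟨hS b hb, fun hbv => hvS (hbv ▸ hb)⟩
  · rintro ⟨A, B, rfl, hB⟩
    exact ⟨traceMk G (A ++ B), by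
      rw [traceMk_append_cons_comm fun b hb => (hB b hb).1, traceMk_append]⟩

theorem mem_IAset_traceMk_cons {a v : V} {L : List V} (h : v ∈ IAset G (traceMk G (a :: L))) :
    v ∈ IAset G (traceMk G L) ∨ v = a ∧ ∀ b ∈ L, ¬ G.Adj a b ∧ b ≠ a := by
  obtain ⟨A, B, hL, hB⟩ := mem_IAset_traceMk_iff.1 h
  rcases A with _ | ⟨a', A⟩
  · obtain ⟨rfl, rfl⟩ := List.cons.inj hL
    exact Or.inr ⟨rfl, hB⟩
  · exact Or.inl (mem_IAset_traceMk_iff.2 ⟨A, B, (List.cons.inj hL).2, hB⟩)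

theorem le_count_of_traceMk_eq_mul_pow {L : List V} {i : V} {m : ℕ} {u : TraceMonoid G}
    (hu : traceMk G L = u * traceMk G [i] ^ m) : m ≤ L.count i := by
  obtain ⟨M, rfl⟩ := traceMk_surjective u
  rw [← traceMk_replicate, ← traceMk_append] at hu
  rw [(perm_of_traceMk_eq hu).count_eq, List.count_append, List.count_replicate_self]
  exact Nat.le_add_left m _

theorem IAcount_le_count (L : List V) (i : V) : IAcount G (traceMk G L) i ≤ L.count i :=
  csSup_le ⟨0, traceMk G L, (mul_one _).symm⟩ fun _ ⟨_, hu⟩ =>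
    le_count_of_traceMk_eq_mul_pow hu

theorem mem_IAset_iff_IAcount_pos {w : TraceMonoid G} {i : V} :
    i ∈ IAset G w ↔ 0 < IAcount G w i := by
  obtain ⟨L, rfl⟩ := traceMk_surjective w
  have hbdd : BddAbove {m : ℕ | ∃ u, traceMk G L = u * traceMk G [i] ^ m} :=
    ⟨L.count i, fun _ ⟨_, hu⟩ => le_count_of_traceMk_eq_mul_pow hu⟩
  constructor
  · rintro ⟨u, hu⟩
    exact lt_of_lt_of_le one_pos (le_csSup hbdd ⟨u, by rwa [pow_one]⟩)
  · intro hpos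
    obtain ⟨u, hu⟩ : IAcount G (traceMk G L) i ∈
        {m : ℕ | ∃ u, traceMk G L = u * traceMk G [i] ^ m} :=
      Nat.sSup_mem ⟨0, traceMk G L, (mul_one _).symm⟩ hbdd
    obtain ⟨k, hk⟩ := Nat.exists_eq_succ_of_ne_zero hpos.ne'
    rw [hk] at hu
    exact ⟨u * traceMk G [i] ^ k, by rw [hu, pow_succ, mul_assoc]⟩

theorem IAcount_eq_single_and_count_eq_one_iff {X : List V} {i : V} :
    (IAcount G (traceMk G X) i = 1 ∧ (∀ v : V, v ≠ i → IAcount G (traceMk G X) v = 0) ∧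
      X.count i = 1) ↔ IAset G (traceMk G X) = {i} ∧ X.count i = 1 := by
  constructor
  · rintro ⟨hi, hv, hX⟩
    refine ⟨Set.ext fun v => ?_, hX⟩
    rw [mem_IAset_iff_IAcount_pos, Set.mem_singleton_iff]
    by_cases hvi : v = i
    · simp [hvi, hi]
    · simp [hvi, hv v hvi]
  · rintro ⟨hIA, hX⟩
    refine ⟨le_antisymm (hX ▸ IAcount_le_count X i) ?_, fun v hvi => ?_, hX⟩
    · exact mem_IAset_iff_IAcount_pos.1 (hIA ▸ Set.mem_singleton i)
    · by_contra hne
      exact hvi (hIA ▸ mem_IAset_iff_IAcount_pos.2 (Nat.pos_of_ne_zero hne) : v ∈ ({i} : Set V))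

end InitialAlphabet

section Levi

variable {V : Type*} [DecidableEq V] {G : SimpleGraph V}

theorem traceMk_append_eq_concat_cases {U W Z : List V} {c : V}
    (h : traceMk G (U ++ W) = traceMk G (Z ++ [c])) :
    (∃ W', traceMk G W = traceMk G (W' ++ [c]) ∧ traceMk G Z = traceMk G (U ++ W')) ∨
    (∃ U', traceMk G U = traceMk G (U' ++ [c]) ∧ traceMk G Z = traceMk G (U' ++ W) ∧
      ∀ b ∈ W, ¬ G.Adj c b ∧ b ≠ c) := by
  obtain ⟨A, B, hUW, hB⟩ :=
    mem_IAset_traceMk_iff.1 ⟨traceMk G Z, by rw [h, traceMk_append]⟩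
  have hcB : ∀ b ∈ B, ¬ G.Adj c b := fun b hb => (hB b hb).1
  have cancel_c : ∀ {Z' : List V}, traceMk G (U ++ W) = traceMk G (Z' ++ [c]) →
      traceMk G Z = traceMk G Z' := fun hZ' => by
    refine mul_right_cancel (b := traceMk G [c]) ?_
    rw [← traceMk_append, ← traceMk_append, ← h, hZ']
  have in_W : ∀ A', W = A' ++ c :: B →
      ∃ W', traceMk G W = traceMk G (W' ++ [c]) ∧ traceMk G Z = traceMk G (U ++ W') := by
    rintro A' rfl
    refine ⟨A' ++ B, traceMk_append_cons_comm hcB A', cancel_c ?_⟩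
    rw [← List.append_assoc, traceMk_append_cons_comm hcB]
    simp only [List.append_assoc]
  rcases List.append_eq_append_iff.1 hUW with ⟨A', -, hW⟩ | ⟨_ | ⟨c', C⟩, rfl, hCW⟩
  · exact Or.inl (in_W A' hW)
  · exact Or.inl (in_W [] hCW.symm)
  · simp only [List.cons_append, List.cons.injEq] at hCW
    obtain ⟨rfl, rfl⟩ := hCW
    have hcC : ∀ b ∈ C, ¬ G.Adj c b := fun b hb => hcB b (List.mem_append_left W hb)
    refine Or.inr ⟨A ++ C, traceMk_append_cons_comm hcC A, cancel_c ?_,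
      fun b hb => hB b (List.mem_append_right C hb)⟩
    rw [List.append_assoc, List.cons_append, traceMk_append_cons_comm hcB]
    simp only [List.append_assoc]

theorem exists_levi_decomposition {X : List V} :
    ∀ {Y U W : List V}, traceMk G (X ++ Y) = traceMk G (U ++ W) →
    ∃ P Q R S : List V, traceMk G X = traceMk G (P ++ Q) ∧ traceMk G Y = traceMk G (R ++ S) ∧
      traceMk G U = traceMk G (P ++ R) ∧ traceMk G W = traceMk G (Q ++ S) ∧
      ∀ a ∈ Q, ∀ b ∈ R, ¬ G.Adj a b ∧ a ≠ b := by
  intro Y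
  induction Y using List.reverseRecOn with
  | nil =>
    intro U W h
    refine ⟨U, W, [], [], by rwa [List.append_nil] at h, rfl, by rw [List.append_nil],
      by rw [List.append_nil], by simp⟩
  | append_singleton Y c ih =>
    intro U W h
    rw [← List.append_assoc] at h
    rcases traceMk_append_eq_concat_cases h.symm with ⟨W', hW, hZ⟩ | ⟨U', hU, hZ, hcW⟩
    · obtain ⟨P, Q, R, S, hX, hY, hU, hW', hQR⟩ := ih hZ
      refine ⟨P, Q, R, S ++ [c], hX, ?_, hU, ?_, hQR⟩
      · rw [traceMk_append, hY, ← traceMk_append, List.append_assoc]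
      · rw [hW, traceMk_append, hW', ← traceMk_append, List.append_assoc]
    · obtain ⟨P, Q, R, S, hX, hY, hU', hW, hQR⟩ := ih hZ
      have hmemW := fun a => (perm_of_traceMk_eq hW).mem_iff (a := a)
      refine ⟨P, Q, R ++ [c], S, hX, ?_, ?_, hW, ?_⟩
      · rw [traceMk_append, hY, ← traceMk_append, List.append_assoc R [c] S,
          List.singleton_append,
          traceMk_append_cons_comm fun b hb => (hcW b ((hmemW b).2 (List.mem_append_right Q hb))).1]
      · rw [hU, traceMk_append, hU', ← traceMk_append, List.append_assoc]
      · intro a ha b hb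
        rcases List.mem_append.1 hb with hb | hb
        · exact hQR a ha b hb
        · obtain rfl := List.mem_singleton.1 hb
          obtain ⟨hca, hac⟩ := hcW a ((hmemW a).2 (List.mem_append_left S ha))
          exact ⟨fun h => hca h.symm, hac⟩

end Levi

section IForm

variable {V : Type*} [DecidableEq V] {G : SimpleGraph V} {i : V}

theorem traceMk_eq_of_mul_eq {X X' : List V} {r r' : TraceMonoid G}
    (hX : IAset G (traceMk G X) ⊆ {i}) (hX' : IAset G (traceMk G X') ⊆ {i})
    (hcX : X.count i = 1) (hcX' : X'.count i = 1)
    (h : traceMk G X * r = traceMk G X' * r') : traceMk G X = traceMk G X' := by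
  obtain ⟨R, rfl⟩ := traceMk_surjective r
  obtain ⟨R', rfl⟩ := traceMk_surjective r'
  rw [← traceMk_append, ← traceMk_append] at h
  obtain ⟨P, Q, Q', -, hPQ, -, hPQ', -, hQQ'⟩ := exists_levi_decomposition h
  rw [hPQ] at hX ⊢
  rw [hPQ'] at hX' ⊢
  have hcount : Q.count i = Q'.count i := by
    rw [(perm_of_traceMk_eq hPQ).count_eq, List.count_append] at hcX
    rw [(perm_of_traceMk_eq hPQ').count_eq, List.count_append] at hcX'
    omega
  have hmem : i ∈ Q ↔ i ∈ Q' := by rw [← List.count_pos_iff, ← List.count_pos_iff, hcount]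
  have hiQ : i ∉ Q := fun hiQ => (hQQ' i hiQ i (hmem.1 hiQ)).2 rfl
  have hiQ' : i ∉ Q' := fun hiQ' => hiQ (hmem.2 hiQ')
  rw [of_not_not fun hQ => hiQ (mem_of_IAset_subset hX hQ),
    of_not_not fun hQ' => hiQ' (mem_of_IAset_subset hX' hQ')]

theorem traceMk_eq_of_prod_ofFn_eq :
    ∀ {m : ℕ} (Ls Ls' : Fin m → List V),
      (List.ofFn fun j => traceMk G (Ls j)).prod = (List.ofFn fun j => traceMk G (Ls' j)).prod →
      (∀ j, IAset G (traceMk G (Ls j)) ⊆ {i} ∧ (Ls j).count i = 1) →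
      (∀ j, IAset G (traceMk G (Ls' j)) ⊆ {i} ∧ (Ls' j).count i = 1) →
      ∀ j, traceMk G (Ls j) = traceMk G (Ls' j)
  | 0, _, _, _, _, _, j => j.elim0
  | m + 1, Ls, Ls', h, hLs, hLs', j => by
    rw [List.ofFn_succ, List.ofFn_succ, List.prod_cons, List.prod_cons] at h
    have h0 := traceMk_eq_of_mul_eq (hLs 0).1 (hLs' 0).1 (hLs 0).2 (hLs' 0).2 h
    rw [h0] at h
    have hsucc := traceMk_eq_of_prod_ofFn_eq (fun k => Ls k.succ) (fun k => Ls' k.succ)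
      (mul_left_cancel h) (fun k => hLs k.succ) (fun k => hLs' k.succ)
    exact Fin.cases h0 hsucc j

/-- `K` collects the letters of `B` joined to the final `i` by a chain of adjacencies; the other
letters `D` commute past `K ++ [i]`. -/
theorem exists_traceMk_append_singleton_eq (i : V) :
    ∀ B : List V, ∃ K D : List V, traceMk G (B ++ [i]) = traceMk G (K ++ [i] ++ D) ∧
      IAset G (traceMk G (K ++ [i])) ⊆ {i}
  | [] => ⟨[], [], rfl, fun v hv => by
      rcases mem_IAset_traceMk_cons hv with hv | ⟨rfl, -⟩
      · simp [mem_IAset_traceMk_iff] at hv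
      · rfl⟩
  | a :: B => by
    obtain ⟨K, D, hKD, hK⟩ := exists_traceMk_append_singleton_eq i B
    by_cases hdep : G.Adj a i ∨ ∃ k ∈ K, G.Adj a k
    · refine ⟨a :: K, D, ?_, ?_⟩
      · rw [List.cons_append, traceMk_cons, hKD, ← traceMk_cons]
        rfl
      intro v hv
      rcases mem_IAset_traceMk_cons hv with hv | ⟨rfl, hindep⟩
      · exact hK hv
      · rcases hdep with hi | ⟨k, hk, hak⟩
        · exact absurd hi (hindep i (List.mem_append_right K (List.mem_singleton_self i))).1
        · exact absurd hak (hindep k (List.mem_append_left [i] hk)).1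
    · push Not at hdep
      have hcomm : Commute (traceMk G [a]) (traceMk G (K ++ [i])) :=
        commute_traceMk_of_forall_not_adj fun x hx => by
          rcases List.mem_append.1 hx with hx | hx
          · exact hdep.2 x hx
          · exact (List.mem_singleton.1 hx) ▸ hdep.1
      refine ⟨K, a :: D, ?_, hK⟩
      rw [List.cons_append, traceMk_cons, hKD, traceMk_append, ← mul_assoc, hcomm.eq, mul_assoc,
        ← traceMk_cons, ← traceMk_append]

theorem exists_iForm :
    ∀ (m : ℕ) (L : List V), L.count i = m → IAset G (traceMk G L) ⊆ {i} →
      ∃ Ls : Fin m → List V, traceMk G L = (List.ofFn fun j => traceMk G (Ls j)).prod ∧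
        ∀ j, IAset G (traceMk G (Ls j)) = {i} ∧ (Ls j).count i = 1
  | 0, L, hL, hIA => by
    obtain rfl : L = [] :=
      of_not_not fun hne => List.count_eq_zero.1 hL (mem_of_IAset_subset (P := []) hIA hne)
    exact ⟨Fin.elim0, traceMk_nil, fun j => j.elim0⟩
  | m + 1, L, hL, hIA => by
    have hiL : i ∈ L := List.count_pos_iff.1 (by omega)
    obtain ⟨B, T, rfl, hiB⟩ := List.eq_append_cons_of_mem hiL
    obtain ⟨K, D, hKD, hK⟩ := exists_traceMk_append_singleton_eq (G := G) i B
    have hsplit : traceMk G (B ++ i :: T) = traceMk G (K ++ [i]) * traceMk G (D ++ T) := by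
      rw [← List.singleton_append, ← List.append_assoc, traceMk_append, hKD, ← traceMk_append,
        List.append_assoc (K ++ [i]), traceMk_append (K ++ [i])]
    have hcount := (perm_of_traceMk_eq hKD).count_eq i
    simp only [List.count_append, List.count_cons_self, List.count_eq_zero.2 hiB] at hcount hL
    obtain ⟨Ls, hprod, hLs⟩ := exists_iForm m (D ++ T) (by rw [List.count_append]; omega)
      ((IAset_subset_mul _ _).trans (hsplit ▸ hIA))
    refine ⟨Fin.cons (K ++ [i]) Ls, ?_, Fin.cases ⟨?_, ?_⟩ hLs⟩
    · rw [List.ofFn_succ, List.prod_cons, hsplit, hprod]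
      simp only [Fin.cons_zero, Fin.cons_succ]
    · exact hK.antisymm (Set.singleton_subset_iff.2 ⟨traceMk G K, traceMk_append K [i]⟩)
    · simp only [Fin.cons_zero, List.count_append, List.count_singleton_self]
      omega

end IForm

/-- existence and uniqueness of the `i`-form: if `w ∈ M(I,G)` has initial
alphabet (as a set) equal to `{i}` and `i` occurs `m` times in `w`, then there are unique
traces `w₁, …, w_m` with `w = w₁⋯w_m`, each `w_j` having initial alphabet multiset `{i}`
(i.e. `IA`-multiplicity `1` at `i` and `0` elsewhere) and containing the letter `i` exactly
once.  The factors are represented by lists `Ls j`; uniqueness is up to trace equality. -/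
theorem stmt7 {V : Type*} [DecidableEq V] (G : SimpleGraph V) (L : List V) (i : V)
    (hIA : IAset G (traceMk G L) = {i}) :
    ∃ Ls : Fin (L.count i) → List V,
      (traceMk G L = (List.ofFn fun j => traceMk G (Ls j)).prod) ∧
      (∀ j, IAcount G (traceMk G (Ls j)) i = 1 ∧
        (∀ v : V, v ≠ i → IAcount G (traceMk G (Ls j)) v = 0) ∧
        (Ls j).count i = 1) ∧
      (∀ Ls' : Fin (L.count i) → List V,
        (traceMk G L = (List.ofFn fun j => traceMk G (Ls' j)).prod) →
        (∀ j, IAcount G (traceMk G (Ls' j)) i = 1 ∧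
          (∀ v : V, v ≠ i → IAcount G (traceMk G (Ls' j)) v = 0) ∧
          (Ls' j).count i = 1) →
        ∀ j, traceMk G (Ls' j) = traceMk G (Ls j)) := by
  obtain ⟨Ls, hprod, hLs⟩ := exists_iForm (L.count i) L rfl hIA.subset
  refine ⟨Ls, hprod, fun j => IAcount_eq_single_and_count_eq_one_iff.2 (hLs j),
    fun Ls' hprod' hLs' => ?_⟩
  have hLs'' := fun j => IAcount_eq_single_and_count_eq_one_iff.1 (hLs' j)
  exact traceMk_eq_of_prod_ofFn_eq Ls' Ls (hprod'.symm.trans hprod)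
    (fun j => ⟨(hLs'' j).1.subset, (hLs'' j).2⟩) (fun j => ⟨(hLs j).1.subset, (hLs j).2⟩)
end
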